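/- Let G = (A,B,E) be a bipartite graph with |A| = |B| = N and minimum degree δ(G) ≥ d satisfying: (i) for any X ⊆ A, Y ⊆ B with |X| ≥ N/4 and |Y| ≥ N/4 one has e_G(X,Y) ≥ dN/40; (ii) for any X ⊆ A with |X| ≤ N/4 and any Y ⊆ B, if e_G(X,Y) ≥ 3d|X|/4 then |Y| ≥ 2|X|; (iii) for any Y ⊆ B with |Y| ≤ N/4 and any X ⊆ A, if e_G(X,Y) ≥ 3d|Y|/4 then |X| ≥ 2|Y|. Then for every integer r with r ≤ d/80 and every bipartite graph H on vertex set A ∪ B (with all edges between A and B) with maximum degree Δ(H) ≤ r/2, there exists a subgraph G' of G that is edge-disjoint from H such that the union G' ∪ H is r-regular. -/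

import Mathlib

/-!
Put `K = G ∖ H`, `f a = r - deg_H a` and `g b = r - deg_H b`; we need a subgraph of `K` with
degrees `f` on `A` and `g` on `B`. By Hall's theorem on a gadget with `f a` copies of each
`a`, `g b` copies of each `b` and one node per edge, such a subgraph exists as soon as
`∑ f = ∑ g` and `∑_{X} f ≤ e_K(X, B ∖ Y) + ∑_{Y} g` for all `X ⊆ A`, `Y ⊆ B`.
Since `r/2 ≤ f, g ≤ r`, this cut condition is immediate when `|Y| ≥ 2|X|`. Otherwise,
if `|X| ≤ N/4` then (ii) says that at least `d|X|/4` edges of `G` leave `X` outside `Y`,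
and if `X` and `B ∖ Y` are both large then (i) gives `dN/40` such edges; at most `r|X|/2`
of them belong to `H`, and `d ≥ 80r` leaves at least `r|X|`. The case of a small `B ∖ Y` is
the mirror image, using (iii).
-/

open Finset

/-- Degree in part `A` of a bipartite graph on parts `A = B = Fin N`
(encoded by its bipartite adjacency function). -/
def degA {N : ℕ} (G : Fin N → Fin N → Bool) (a : Fin N) : ℕ :=
  (Finset.univ.filter fun b => G a b = true).card

/-- Degree in part `B`. -/
def degB {N : ℕ} (G : Fin N → Fin N → Bool) (b : Fin N) : ℕ :=
  (Finset.univ.filter fun a => G a b = true).card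

/-- The number `e_G(X,Y)` of edges between `X ⊆ A` and `Y ⊆ B`. -/
def eBip {N : ℕ} (G : Fin N → Fin N → Bool) (X Y : Finset (Fin N)) : ℕ :=
  ((X ×ˢ Y).filter fun e => G e.1 e.2 = true).card

namespace BipartiteFactor

variable {N : ℕ}

lemma degA_eq_sum (K : Fin N → Fin N → Bool) (a : Fin N) :
    degA K a = ∑ b, if K a b then 1 else 0 :=
  card_filter _ _

lemma degB_eq_degA_flip (K : Fin N → Fin N → Bool) (b : Fin N) :
    degB K b = degA (flip K) b :=
  rfl

lemma eBip_eq_sum_sum (K : Fin N → Fin N → Bool) (X Y : Finset (Fin N)) :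
    eBip K X Y = ∑ a ∈ X, ∑ b ∈ Y, if K a b then 1 else 0 := by
  rw [eBip, card_filter, sum_product]

lemma eBip_flip (K : Fin N → Fin N → Bool) (X Y : Finset (Fin N)) :
    eBip (flip K) Y X = eBip K X Y := by
  rw [eBip_eq_sum_sum, eBip_eq_sum_sum, sum_comm]
  rfl

lemma eBip_univ_right (K : Fin N → Fin N → Bool) (X : Finset (Fin N)) :
    eBip K X univ = ∑ a ∈ X, degA K a := by
  simp only [eBip_eq_sum_sum, degA_eq_sum]

lemma eBip_add_eBip_compl (K : Fin N → Fin N → Bool) (X Y : Finset (Fin N)) :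
    eBip K X Y + eBip K X Yᶜ = eBip K X univ := by
  simp only [eBip_eq_sum_sum, ← sum_add_distrib, sum_add_sum_compl]

lemma eBip_le_sum_degA (K : Fin N → Fin N → Bool) (X Y : Finset (Fin N)) :
    eBip K X Y ≤ ∑ a ∈ X, degA K a := by
  rw [← eBip_univ_right]
  simp only [eBip_eq_sum_sum]
  exact sum_le_sum fun a _ => sum_le_sum_of_subset (subset_univ Y)

lemma eBip_le_eBip_diff_add (G H : Fin N → Fin N → Bool) (X Y : Finset (Fin N)) :
    eBip G X Y ≤ eBip (fun a b => G a b && !H a b) X Y + eBip H X Y := by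
  simp only [eBip_eq_sum_sum, ← sum_add_distrib]
  refine sum_le_sum fun a _ => sum_le_sum fun b _ => ?_
  cases G a b <;> cases H a b <;> simp

lemma sum_degA_eq_sum_degB (K : Fin N → Fin N → Bool) : ∑ a, degA K a = ∑ b, degB K b := by
  simp only [degB_eq_degA_flip, degA_eq_sum, flip]
  exact sum_comm

lemma degA_or_of_disjoint {K H : Fin N → Fin N → Bool} (h : ∀ a b, ¬(K a b = true ∧ H a b = true))
    (a : Fin N) : degA (fun x y => K x y || H x y) a = degA K a + degA H a := by
  simp only [degA_eq_sum, ← sum_add_distrib]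
  refine sum_congr rfl fun b _ => ?_
  have := h a b
  revert this
  cases K a b <;> cases H a b <;> simp

lemma degB_or_of_disjoint {K H : Fin N → Fin N → Bool} (h : ∀ a b, ¬(K a b = true ∧ H a b = true))
    (b : Fin N) : degB (fun x y => K x y || H x y) b = degB K b + degB H b :=
  degA_or_of_disjoint (K := flip K) (H := flip H) (fun b a => h a b) b

section HallGadget

variable (K : Fin N → Fin N → Bool) (f g : Fin N → ℕ)

/- Left nodes: `f a` copies of each `a ∈ A` and a node for every pair `(a, b)`; right nodes:
`g b` copies of each `b ∈ B` and again a node for every pair. A copy of `a` is matched to an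
edge `(a, b)` of `K`, which forces the left node of that edge onto a copy of `b`. -/
abbrev GadgetNode (f : Fin N → ℕ) := (Σ v : Fin N, Fin (f v)) ⊕ (Fin N × Fin N)

def gadgetNbhd : GadgetNode f → Finset (GadgetNode g)
  | .inl c => (univ.filter fun b => K c.1 b = true).image fun b => .inr (c.1, b)
  | .inr e => insert (.inr e) (univ.image fun j : Fin (g e.2) => .inl ⟨e.2, j⟩)

lemma card_le_card_biUnion_gadgetNbhd
    (hcut : ∀ X Y : Finset (Fin N), ∑ a ∈ X, f a ≤ eBip K X Yᶜ + ∑ b ∈ Y, g b)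
    (S : Finset (GadgetNode f)) : #S ≤ #(S.biUnion (gadgetNbhd K f g)) := by
  set X := S.toLeft.image Sigma.fst
  set F := S.toRight
  set Y := F.image Prod.snd
  set E := (X ×ˢ Yᶜ).filter fun e => K e.1 e.2 = true
  set copiesY := Y.sigma fun b => (univ : Finset (Fin (g b)))
  have hleft : #S.toLeft ≤ ∑ a ∈ X, f a :=
    calc #S.toLeft ≤ #(X.sigma fun a => (univ : Finset (Fin (f a)))) :=
          card_le_card fun c hc => mem_sigma.2 ⟨mem_image_of_mem _ hc, mem_univ _⟩
      _ = ∑ a ∈ X, f a := by simp [card_sigma]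
  have hEF : Disjoint E F := disjoint_left.2 fun e he heF =>
    (mem_compl.1 (mem_product.1 (mem_filter.1 he).1).2) (mem_image_of_mem _ heF)
  have hsub : (E ∪ F).image Sum.inr ∪ copiesY.image Sum.inl ⊆ S.biUnion (gadgetNbhd K f g) := by
    intro x hx
    simp only [mem_union, mem_image, copiesY, mem_sigma] at hx
    rcases hx with ⟨e, he | he, rfl⟩ | ⟨⟨b, j⟩, ⟨hb, -⟩, rfl⟩
    · simp only [E, mem_filter, mem_product, X, mem_image] at he
      obtain ⟨⟨⟨c, hc, hca⟩, -⟩, hK⟩ := he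
      refine mem_biUnion.2 ⟨.inl c, mem_toLeft.1 hc, ?_⟩
      exact mem_image.2 ⟨e.2, mem_filter.2 ⟨mem_univ _, hca ▸ hK⟩, by rw [hca]⟩
    · exact mem_biUnion.2 ⟨.inr e, mem_toRight.1 he, mem_insert_self _ _⟩
    · obtain ⟨e, he, rfl⟩ := mem_image.1 hb
      exact mem_biUnion.2 ⟨.inr e, mem_toRight.1 he, mem_insert_of_mem (by simp)⟩
  have hE : eBip K X Yᶜ = #E := rfl
  calc #S = #S.toLeft + #F := card_toLeft_add_card_toRight.symm
    _ ≤ #E + ∑ b ∈ Y, g b + #F := by have := hcut X Y; omega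
    _ = #((E ∪ F).image Sum.inr ∪ copiesY.image Sum.inl) := by
      rw [card_union_of_disjoint (by simp [disjoint_left]), card_image_of_injective _ Sum.inr_injective,
        card_image_of_injective _ Sum.inl_injective, card_union_of_disjoint hEF, card_sigma]
      simp only [card_univ, Fintype.card_fin]
      ring
    _ ≤ #(S.biUnion (gadgetNbhd K f g)) := card_le_card hsub

lemma exists_le_degA_eq_degB_le
    (hcut : ∀ X Y : Finset (Fin N), ∑ a ∈ X, f a ≤ eBip K X Yᶜ + ∑ b ∈ Y, g b) :
    ∃ K' : Fin N → Fin N → Bool, (∀ a b, K' a b = true → K a b = true) ∧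
      (∀ a, degA K' a = f a) ∧ ∀ b, degB K' b ≤ g b := by
  obtain ⟨φ, hφ, hφmem⟩ := (all_card_le_biUnion_card_iff_exists_injective _).1
    (card_le_card_biUnion_gadgetNbhd K f g hcut)
  have hcopy : ∀ c : Σ a : Fin N, Fin (f a), ∃ b, K c.1 b = true ∧ φ (.inl c) = .inr (c.1, b) := by
    intro c
    obtain ⟨b, hb, hφc⟩ := mem_image.1 (hφmem (.inl c))
    exact ⟨b, (mem_filter.1 hb).2, hφc.symm⟩
  choose β hβK hβ using hcopy
  refine ⟨fun a b => decide (∃ j, β ⟨a, j⟩ = b), ?_, fun a => ?_, fun b => ?_⟩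
  · intro a b h
    obtain ⟨j, rfl⟩ := of_decide_eq_true h
    exact hβK ⟨a, j⟩
  · have hinj : Function.Injective fun j : Fin (f a) => β ⟨a, j⟩ := by
      intro j j' (h : β ⟨a, j⟩ = β ⟨a, j'⟩)
      have := hφ (by rw [hβ, hβ, h] : φ (.inl ⟨a, j⟩) = φ (.inl ⟨a, j'⟩))
      simpa using this
    calc degA _ a = #(univ.image fun j : Fin (f a) => β ⟨a, j⟩) := by
          rw [degA]; congr 1; ext b; simp
      _ = f a := by rw [card_image_of_injective _ hinj, card_univ, Fintype.card_fin]
  · set inB := univ.filter fun a => ∃ j, β ⟨a, j⟩ = b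
    set copiesB : Finset (GadgetNode g) := univ.image fun j : Fin (g b) => .inl ⟨b, j⟩
    have hmaps : Set.MapsTo (fun a => φ (.inr (a, b))) inB copiesB := by
      intro a ha
      obtain ⟨j, hj⟩ := (mem_filter.1 ha).2
      have hne : φ (.inr (a, b)) ≠ .inr (a, b) := fun h =>
        Sum.inl_ne_inr (hφ ((hβ ⟨a, j⟩).trans (hj ▸ h.symm)))
      simpa [gadgetNbhd, hne, copiesB] using hφmem (.inr (a, b))
    have hinj : Set.InjOn (fun a => φ (.inr (a, b))) inB :=
      fun a _ a' _ h => (Prod.mk.inj (Sum.inr_injective (hφ h))).1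
    calc degB _ b = #inB := by rw [degB]; congr 1; ext a; simp [inB]
      _ ≤ #copiesB := card_le_card_of_injOn _ hmaps hinj
      _ = g b := by
        rw [card_image_of_injective _ fun j j' h => by simpa using h, card_univ, Fintype.card_fin]

theorem exists_le_degA_eq_degB_eq (hsum : ∑ a, f a = ∑ b, g b)
    (hcut : ∀ X Y : Finset (Fin N), ∑ a ∈ X, f a ≤ eBip K X Yᶜ + ∑ b ∈ Y, g b) :
    ∃ K' : Fin N → Fin N → Bool, (∀ a b, K' a b = true → K a b = true) ∧
      (∀ a, degA K' a = f a) ∧ ∀ b, degB K' b = g b := by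
  obtain ⟨K', hK', hA, hB⟩ := exists_le_degA_eq_degB_le K f g hcut
  have hsumB : ∑ b, degB K' b = ∑ b, g b := by
    rw [← sum_degA_eq_sum_degB, ← hsum]
    exact sum_congr rfl fun a _ => hA a
  exact ⟨K', hK', hA, fun b => (sum_eq_sum_iff_of_le fun b _ => hB b).1 hsumB b (mem_univ b)⟩

end HallGadget

section CutCondition

variable {d : ℝ} {r : ℕ} {G H : Fin N → Fin N → Bool}

lemma sum_sub_degA_eq_sum_sub_degB (hA : ∀ a, degA H a ≤ r) (hB : ∀ b, degB H b ≤ r) :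
    ∑ a, (r - degA H a) = ∑ b, (r - degB H b) := by
  have hsumA : ∑ a, (r - degA H a) + ∑ a, degA H a = ∑ _v : Fin N, r := by
    rw [← sum_add_distrib]
    exact sum_congr rfl fun a _ => Nat.sub_add_cancel (hA a)
  have hsumB : ∑ b, (r - degB H b) + ∑ b, degB H b = ∑ _v : Fin N, r := by
    rw [← sum_add_distrib]
    exact sum_congr rfl fun b _ => Nat.sub_add_cancel (hB b)
  have := sum_degA_eq_sum_degB H
  omega

lemma sum_sub_degA_le_sum_sub_degB (hB : ∀ b, 2 * degB H b ≤ r) {X Y : Finset (Fin N)}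
    (hXY : 2 * #X ≤ #Y) : ∑ a ∈ X, (r - degA H a) ≤ ∑ b ∈ Y, (r - degB H b) := by
  have hX : ∑ a ∈ X, (r - degA H a) ≤ #X * r := by
    simpa using sum_le_card_nsmul X _ r fun a _ => Nat.sub_le r (degA H a)
  have hY : #Y * r ≤ 2 * ∑ b ∈ Y, (r - degB H b) := by
    rw [mul_sum]
    simpa using card_nsmul_le_sum Y _ r fun b _ => by have := hB b; omega
  have := Nat.mul_le_mul_right r hXY
  rw [mul_assoc] at this
  omega

lemma sum_sub_degA_le_eBip (hA : ∀ a, 2 * degA H a ≤ r) {X Z : Finset (Fin N)}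
    (hXZ : 3 * (#X * r) ≤ 2 * eBip G X Z) :
    ∑ a ∈ X, (r - degA H a) ≤ eBip (fun a b => G a b && !H a b) X Z := by
  have hX : ∑ a ∈ X, (r - degA H a) ≤ #X * r := by
    simpa using sum_le_card_nsmul X _ r fun a _ => Nat.sub_le r (degA H a)
  have hH : 2 * eBip H X Z ≤ #X * r :=
    calc 2 * eBip H X Z ≤ ∑ a ∈ X, 2 * degA H a := by
          rw [← mul_sum]; exact Nat.mul_le_mul_left 2 (eBip_le_sum_degA H X Z)
      _ ≤ #X * r := by simpa using sum_le_card_nsmul X _ r fun a _ => hA a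
  have := eBip_le_eBip_diff_add G H X Z
  omega

lemma cut_condition_of_small_or_compl_large (hδ : ∀ a, d ≤ (degA G a : ℝ))
    (h1 : ∀ X Y : Finset (Fin N), (N : ℝ) / 4 ≤ (X.card : ℝ) → (N : ℝ) / 4 ≤ (Y.card : ℝ) →
      d * N / 40 ≤ (eBip G X Y : ℝ))
    (h2 : ∀ X Y : Finset (Fin N), (X.card : ℝ) ≤ (N : ℝ) / 4 →
      3 * d * X.card / 4 ≤ (eBip G X Y : ℝ) → 2 * X.card ≤ Y.card)
    (hr : 80 * (r : ℝ) ≤ d) (hA : ∀ a, 2 * degA H a ≤ r) (hB : ∀ b, 2 * degB H b ≤ r)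
    (X Y : Finset (Fin N)) (hXY : (#X : ℝ) ≤ N / 4 ∨ (N : ℝ) / 4 ≤ #Yᶜ) :
    ∑ a ∈ X, (r - degA H a) ≤
      eBip (fun a b => G a b && !H a b) X Yᶜ + ∑ b ∈ Y, (r - degB H b) := by
  rcases le_or_gt (2 * #X) #Y with hexp | hexp
  · exact (sum_sub_degA_le_sum_sub_degB hB hexp).trans (Nat.le_add_left _ _)
  refine (sum_sub_degA_le_eBip hA ?_).trans (Nat.le_add_right _ _)
  suffices 3 * ((#X : ℝ) * r) ≤ 2 * eBip G X Yᶜ by exact_mod_cast this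
  have hrX := mul_le_mul_of_nonneg_left hr (Nat.cast_nonneg (α := ℝ) #X)
  by_cases hX : (#X : ℝ) ≤ N / 4
  · have hXY : (eBip G X Y : ℝ) < 3 * d * #X / 4 := lt_of_not_ge fun h => hexp.not_ge (h2 X Y hX h)
    have hdeg : d * #X ≤ (eBip G X univ : ℝ) := by
      rw [eBip_univ_right, mul_comm, ← nsmul_eq_mul]
      exact_mod_cast card_nsmul_le_sum X _ d fun a _ => hδ a
    have hsplit : (eBip G X Y : ℝ) + eBip G X Yᶜ = eBip G X univ := by
      exact_mod_cast eBip_add_eBip_compl G X Y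
    nlinarith [Nat.cast_nonneg (α := ℝ) r]
  · have hdense := h1 X Yᶜ (le_of_not_ge hX) (hXY.resolve_left hX)
    have hXN : (#X : ℝ) ≤ N := by exact_mod_cast card_le_univ X |>.trans_eq (Fintype.card_fin N)
    nlinarith [mul_le_mul_of_nonneg_left hr (Nat.cast_nonneg (α := ℝ) N),
      mul_le_mul_of_nonneg_left hXN (Nat.cast_nonneg (α := ℝ) r)]

/- If `B ∖ Y` is small, the condition is read off the mirror image (sides of the bipartition
exchanged, `Y ↦ B ∖ Y`, `X ↦ A ∖ X`), where it is the case of a small first set. -/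
lemma cut_condition (hδ : ∀ v, d ≤ (degA G v : ℝ) ∧ d ≤ (degB G v : ℝ))
    (h1 : ∀ X Y : Finset (Fin N), (N : ℝ) / 4 ≤ (X.card : ℝ) → (N : ℝ) / 4 ≤ (Y.card : ℝ) →
      d * N / 40 ≤ (eBip G X Y : ℝ))
    (h2 : ∀ X Y : Finset (Fin N), (X.card : ℝ) ≤ (N : ℝ) / 4 →
      3 * d * X.card / 4 ≤ (eBip G X Y : ℝ) → 2 * X.card ≤ Y.card)
    (h3 : ∀ X Y : Finset (Fin N), (Y.card : ℝ) ≤ (N : ℝ) / 4 →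
      3 * d * Y.card / 4 ≤ (eBip G X Y : ℝ) → 2 * Y.card ≤ X.card)
    (hr : 80 * (r : ℝ) ≤ d) (hA : ∀ a, 2 * degA H a ≤ r) (hB : ∀ b, 2 * degB H b ≤ r)
    (X Y : Finset (Fin N)) :
    ∑ a ∈ X, (r - degA H a) ≤
      eBip (fun a b => G a b && !H a b) X Yᶜ + ∑ b ∈ Y, (r - degB H b) := by
  rcases le_total ((N : ℝ) / 4) #Yᶜ with hZ | hZ
  · exact cut_condition_of_small_or_compl_large (fun a => (hδ a).1) h1 h2 hr hA hB X Y (.inr hZ)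
  have hmirror : ∑ b ∈ Yᶜ, (r - degB H b) ≤
      eBip (fun a b => G a b && !H a b) X Yᶜ + ∑ a ∈ Xᶜ, (r - degA H a) := by
    have := cut_condition_of_small_or_compl_large (G := flip G) (H := flip H)
      (fun b => (hδ b).2) (fun Y X hY hX => by rw [eBip_flip]; exact h1 X Y hX hY)
      (fun Y X hY hE => h3 X Y hY (by rwa [eBip_flip] at hE)) hr hB hA Yᶜ Xᶜ (.inl hZ)
    rw [compl_compl] at this
    rwa [← eBip_flip]
  have hsum := sum_sub_degA_eq_sum_sub_degB (H := H) (r := r) (fun a => by have := hA a; omega)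
    fun b => by have := hB b; omega
  rw [← sum_add_sum_compl X, ← sum_add_sum_compl Y] at hsum
  omega

end CutCondition

end BipartiteFactor

open BipartiteFactor in
/-- **Completing a sparse bipartite graph into an `r`-factor**
(Lemma: completing an arbitrary small graph into an `r`-factor).  Under the expansion
hypotheses (i)–(iii) on `G`, for every integer `r ≤ d/80` and every bipartite graph `H`
on the same parts with `Δ(H) ≤ r/2`, there is a subgraph `G'` of `G`, edge-disjoint from
`H`, such that `G' ∪ H` is `r`-regular. -/
theorem completing_into_r_factor
    (N : ℕ) (d : ℝ) (G : Fin N → Fin N → Bool)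
    (hδ : ∀ v : Fin N, d ≤ (degA G v : ℝ) ∧ d ≤ (degB G v : ℝ))
    (h1 : ∀ X Y : Finset (Fin N), (N : ℝ) / 4 ≤ (X.card : ℝ) → (N : ℝ) / 4 ≤ (Y.card : ℝ) →
      d * N / 40 ≤ (eBip G X Y : ℝ))
    (h2 : ∀ X Y : Finset (Fin N), (X.card : ℝ) ≤ (N : ℝ) / 4 →
      3 * d * X.card / 4 ≤ (eBip G X Y : ℝ) → 2 * X.card ≤ Y.card)
    (h3 : ∀ X Y : Finset (Fin N), (Y.card : ℝ) ≤ (N : ℝ) / 4 →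
      3 * d * Y.card / 4 ≤ (eBip G X Y : ℝ) → 2 * Y.card ≤ X.card)
    (r : ℕ) (hr : (r : ℝ) ≤ d / 80)
    (H : Fin N → Fin N → Bool)
    (hH : ∀ v : Fin N, (degA H v : ℝ) ≤ (r : ℝ) / 2 ∧ (degB H v : ℝ) ≤ (r : ℝ) / 2) :
    ∃ G' : Fin N → Fin N → Bool,
      (∀ a b, G' a b = true → G a b = true) ∧
      (∀ a b, ¬(G' a b = true ∧ H a b = true)) ∧
      (∀ a, degA (fun x y => G' x y || H x y) a = r) ∧
      (∀ b, degB (fun x y => G' x y || H x y) b = r) := by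
  have hA : ∀ a, 2 * degA H a ≤ r := fun a => by
    have := (hH a).1; exact_mod_cast (by linarith : (2 * degA H a : ℝ) ≤ r)
  have hB : ∀ b, 2 * degB H b ≤ r := fun b => by
    have := (hH b).2; exact_mod_cast (by linarith : (2 * degB H b : ℝ) ≤ r)
  obtain ⟨G', hG', hG'A, hG'B⟩ := exists_le_degA_eq_degB_eq (fun a b => G a b && !H a b)
    (fun a => r - degA H a) (fun b => r - degB H b)
    (sum_sub_degA_eq_sum_sub_degB (fun a => by have := hA a; omega) fun b => by have := hB b; omega)
    (cut_condition hδ h1 h2 h3 (by linarith) hA hB)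
  have hdisj : ∀ a b, ¬(G' a b = true ∧ H a b = true) := fun a b ⟨hG'ab, hHab⟩ => by
    simpa [hHab] using hG' a b hG'ab
  refine ⟨G', fun a b h => (Bool.and_eq_true _ _ ▸ hG' a b h).1, hdisj, fun a => ?_, fun b => ?_⟩
  · rw [degA_or_of_disjoint hdisj, hG'A]
    have := hA a; omega
  · rw [degB_or_of_disjoint hdisj, hG'B]
    have := hB b; omega
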